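/- Let f : A →* B be a monoid homomorphism which has the left lifting property against all surjective monoid homomorphisms. Let ε : FreeMonoid B →* B be the canonical homomorphism extending the identity function of B, let inl : A →* A ∗ FreeMonoid B be the coproduct inclusion, and let p : A ∗ FreeMonoid B →* B be the homomorphism induced by f and ε. Then p is surjective, and there exists a monoid homomorphism L : B →* A ∗ FreeMonoid B such that L ∘ f = inl and p ∘ L = id_B. In particular, f is a retract of the inclusion inl : A →* A ∗ FreeMonoid B by maps fixing A. -/

import Mathlib

open Monoid

universe u

theorem Monoid.Coprod.lift_surjective_of_surjective_right {M N P : Type*} [Monoid M] [Monoid N]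
    [Monoid P] (f : M →* P) {g : N →* P} (hg : Function.Surjective g) :
    Function.Surjective (Coprod.lift f g) := fun p =>
  let ⟨n, hn⟩ := hg p
  ⟨Coprod.inr n, by rw [Coprod.lift_apply_inr, hn]⟩

theorem FreeMonoid.lift_id_surjective {M : Type*} [Monoid M] :
    Function.Surjective (FreeMonoid.lift (id : M → M)) := fun m =>
  ⟨FreeMonoid.of m, FreeMonoid.lift_eval_of _ _⟩

/-- Let `f : A →* B` have the left lifting property against all surjective
monoid homomorphisms. Let `ε : FreeMonoid B →* B` be the canonical homomorphism extending
the identity of `B`, `inl : A →* A ∗ FreeMonoid B` the coproduct inclusion, and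
`p := Coprod.lift f ε : A ∗ FreeMonoid B →* B`. Then `p` is surjective and there is
`L : B →* A ∗ FreeMonoid B` with `L ∘ f = inl` and `p ∘ L = id`; in particular `f` is a
retract of `inl` by maps fixing `A`. -/
theorem stmt8 {A B : Type u} [Monoid A] [Monoid B] (f : A →* B)
    (hf : ∀ (N Q : Type u) [Monoid N] [Monoid Q] (p : N →* Q), Function.Surjective p →
      ∀ (u : A →* N) (v : B →* Q), p.comp u = v.comp f →
        ∃ L : B →* N, L.comp f = u ∧ p.comp L = v) :
    Function.Surjective (Coprod.lift f (FreeMonoid.lift (id : B → B))) ∧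
    ∃ L : B →* Coprod A (FreeMonoid B),
      L.comp f = Coprod.inl ∧
      (Coprod.lift f (FreeMonoid.lift (id : B → B))).comp L = MonoidHom.id B := by
  have hp := Coprod.lift_surjective_of_surjective_right f FreeMonoid.lift_id_surjective
  have hsquare : (Coprod.lift f (FreeMonoid.lift (id : B → B))).comp Coprod.inl =
      (MonoidHom.id B).comp f := by
    rw [Coprod.lift_comp_inl, MonoidHom.id_comp]
  exact ⟨hp, hf _ _ _ hp Coprod.inl (MonoidHom.id B) hsquare⟩
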